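/- (Infeasibility of single-database SPIR.) For K ≥ 2 messages, L ≥ 1, and a single database (N = 1), no zero-error SPIR scheme exists: there are no random variables (W_1, …, W_K, S, F, Q_1^{[k]}, A_1^{[k]}) as in the SPIR model that simultaneously satisfy the correctness, user-privacy and database-privacy constraints. -/

import Mathlib

open Finset

attribute [local instance] Classical.propDecidable

/-- Probability that the random variable `X` takes the value `a`, on a finite
sample space `Ω` with probability mass function `p`. -/
noncomputable def prob {Ω α : Type*} [Fintype Ω] (p : Ω → ℝ) (X : Ω → α) (a : α) : ℝ :=
  ∑ ω : Ω, if X ω = a then p ω else 0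

/-- Shannon entropy (in bits) of the random variable `X`. -/
noncomputable def ent {Ω α : Type*} [Fintype Ω] [Fintype α] (p : Ω → ℝ) (X : Ω → α) : ℝ :=
  - ∑ a : α, prob p X a * Real.logb 2 (prob p X a)

/-- Conditional Shannon entropy (in bits) `H(X | Y)`. -/
noncomputable def condEnt {Ω α β : Type*} [Fintype Ω] [Fintype α] [Fintype β]
    (p : Ω → ℝ) (X : Ω → α) (Y : Ω → β) : ℝ :=
  ent p (fun ω => (X ω, Y ω)) - ent p Y

/-- Shannon mutual information (in bits) `I(X ; Y)`. -/
noncomputable def mutInfo {Ω α β : Type*} [Fintype Ω] [Fintype α] [Fintype β]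
    (p : Ω → ℝ) (X : Ω → α) (Y : Ω → β) : ℝ :=
  ent p X + ent p Y - ent p (fun ω => (X ω, Y ω))

/-- `X` and `Y` are identically distributed. -/
def IdentDist {Ω α : Type*} [Fintype Ω] (p : Ω → ℝ) (X Y : Ω → α) : Prop :=
  ∀ a : α, prob p X a = prob p Y a

/-- `X` is uniformly distributed on `α`. -/
def Unif {Ω α : Type*} [Fintype Ω] [Fintype α] (p : Ω → ℝ) (X : Ω → α) : Prop :=
  ∀ a : α, prob p X a = 1 / (Fintype.card α : ℝ)

/-- A zero-error SPIR scheme with `K` messages of `L` bits each and a *single* database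
(`N = 1`): a finite probability space carrying the messages `W_1, …, W_K` (uniform on
`L`-bit strings), the common randomness `S`, the user randomness `F` (all mutually
independent), a query `Q_1^[k]` that is a deterministic function of `F`, and an answer
`A_1^[k]` that is a deterministic function of `(Q_1^[k], W_1, …, W_K, S)`, satisfying
correctness, user-privacy and database-privacy. -/
structure SingleDBSPIR (K L : ℕ) where
  /-- the finite sample space -/
  Ω : Type
  [instΩ : Fintype Ω]
  /-- the probability mass function -/
  p : Ω → ℝ
  p_nonneg : ∀ ω, 0 ≤ p ω
  p_sum : ∑ ω : Ω, p ω = 1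
  /-- value type of the common randomness -/
  𝓢 : Type
  [inst𝓢 : Fintype 𝓢]
  /-- value type of the user randomness -/
  𝓕 : Type
  [inst𝓕 : Fintype 𝓕]
  /-- value type of the query -/
  𝓠 : Type
  [inst𝓠 : Fintype 𝓠]
  /-- value type of the answer -/
  𝓐 : Type
  [inst𝓐 : Fintype 𝓐]
  /-- the messages -/
  W : Fin K → Ω → (Fin L → ZMod 2)
  /-- the common randomness -/
  S : Ω → 𝓢
  /-- the user randomness -/
  F : Ω → 𝓕
  /-- the query `Q_1^[k]` for desired message index `k` -/
  Q : Fin K → Ω → 𝓠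
  /-- the answer `A_1^[k]` for desired message index `k` -/
  A : Fin K → Ω → 𝓐
  /-- each message is uniformly distributed on the set of `L`-bit strings -/
  hWunif : ∀ k, Unif p (W k)
  /-- the messages, the common randomness and the user randomness are mutually
  independent -/
  hIndep : ∀ (w : ∀ _ : Fin K, Fin L → ZMod 2) (s : 𝓢) (f : 𝓕),
    prob p (fun ω => ((fun k => W k ω), S ω, F ω)) (w, s, f)
      = (∏ k, prob p (W k) (w k)) * prob p S s * prob p F f
  /-- the query is a deterministic function of `F` -/
  hQ : ∀ k, ∃ g : 𝓕 → 𝓠, ∀ ω, Q k ω = g (F ω)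
  /-- the answer is a deterministic function of the query, the messages and `S` -/
  hA : ∀ k, ∃ g : 𝓠 → (∀ _ : Fin K, Fin L → ZMod 2) → 𝓢 → 𝓐,
    ∀ ω, A k ω = g (Q k ω) (fun j => W j ω) (S ω)
  /-- correctness: `W_k` is a deterministic function of `(A_1^[k], F)` -/
  hCorrect : ∀ k, ∃ g : 𝓐 → 𝓕 → (Fin L → ZMod 2),
    ∀ ω, W k ω = g (A k ω) (F ω)
  /-- user-privacy -/
  hUserPriv : ∀ k k' : Fin K,
    IdentDist p (fun ω => (Q k ω, A k ω, (fun j => W j ω), S ω))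
                (fun ω => (Q k' ω, A k' ω, (fun j => W j ω), S ω))
  /-- database-privacy -/
  hDBPriv : ∀ k : Fin K,
    mutInfo p (fun ω => (fun j : {j : Fin K // j ≠ k} => W j.1 ω))
      (fun ω => (Q k ω, A k ω, F ω)) = 0

attribute [instance] SingleDBSPIR.instΩ SingleDBSPIR.inst𝓢 SingleDBSPIR.inst𝓕
  SingleDBSPIR.inst𝓠 SingleDBSPIR.inst𝓐

/-!
Fix two indices `k ≠ k'` and a positive-probability outcome with query `q = Q^[k]`. By
user-privacy the query `q` is also issued for `k'` with some user randomness `f`, and on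
every possible `(W, S)` the answer functions for `k` and `k'` agree at `q`. Hence, given `q`,
the answer `A^[k]` together with `f` decodes `W_{k'}` as well. Since the messages are
independent of `(S, F)`, a value of `W_{k'}` different from the decoded one is possible, yet it
never occurs jointly with `(Q^[k], A^[k], F)`; so `W_{\overline{k}}` and `(Q^[k], A^[k], F)`
are dependent, and by Gibbs' inequality their mutual information is positive.
-/

section Probability

variable {Ω α β : Type*} [Fintype Ω] {p : Ω → ℝ}

lemma prob_nonneg (hp : ∀ ω, 0 ≤ p ω) (X : Ω → α) (a : α) : 0 ≤ prob p X a :=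
  sum_nonneg fun ω _ => by split_ifs <;> simp [hp ω]

lemma prob_pos_iff (hp : ∀ ω, 0 ≤ p ω) {X : Ω → α} {a : α} :
    0 < prob p X a ↔ ∃ ω, 0 < p ω ∧ X ω = a := by
  constructor
  · intro h
    obtain ⟨ω, -, hω⟩ := exists_lt_of_sum_lt (s := univ) (f := fun _ => (0 : ℝ))
      (by simpa [prob] using h)
    split_ifs at hω with hX
    exacts [⟨ω, hω, hX⟩, absurd hω (lt_irrefl 0)]
  · rintro ⟨ω, hω, rfl⟩
    have h := single_le_sum (f := fun ω' => if X ω' = X ω then p ω' else 0)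
      (fun ω' _ => by split_ifs <;> simp [hp ω']) (mem_univ ω)
    rw [if_pos rfl] at h
    exact hω.trans_le h

lemma prob_apply_pos (hp : ∀ ω, 0 ≤ p ω) {ω : Ω} (hω : 0 < p ω) (X : Ω → α) :
    0 < prob p X (X ω) :=
  (prob_pos_iff hp).2 ⟨ω, hω, rfl⟩

lemma sum_prob [Fintype α] (X : Ω → α) : ∑ a, prob p X a = ∑ ω, p ω := by
  simp only [prob]
  rw [sum_comm]
  simp

lemma sum_prob_pair_right [Fintype β] (X : Ω → α) (Y : Ω → β) (x : α) :
    ∑ y, prob p (fun ω => (X ω, Y ω)) (x, y) = prob p X x := by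
  simp only [prob, Prod.mk.injEq]
  rw [sum_comm]
  refine sum_congr rfl fun ω _ => ?_
  by_cases h : X ω = x <;> simp [h]

lemma sum_prob_pair_left [Fintype α] (X : Ω → α) (Y : Ω → β) (y : β) :
    ∑ x, prob p (fun ω => (X ω, Y ω)) (x, y) = prob p Y y := by
  simp only [prob, Prod.mk.injEq]
  rw [sum_comm]
  refine sum_congr rfl fun ω _ => ?_
  by_cases h : Y ω = y <;> simp [h]

lemma prob_pair_le_fst (hp : ∀ ω, 0 ≤ p ω) [Fintype β] (X : Ω → α) (Y : Ω → β) (z : α × β) :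
    prob p (fun ω => (X ω, Y ω)) z ≤ prob p X z.1 := by
  rw [← sum_prob_pair_right X Y z.1]
  exact single_le_sum (fun y _ => prob_nonneg hp _ (z.1, y)) (mem_univ z.2)

lemma prob_pair_le_snd (hp : ∀ ω, 0 ≤ p ω) [Fintype α] (X : Ω → α) (Y : Ω → β) (z : α × β) :
    prob p (fun ω => (X ω, Y ω)) z ≤ prob p Y z.2 := by
  rw [← sum_prob_pair_left X Y z.2]
  exact single_le_sum (fun x _ => prob_nonneg hp _ (x, z.2)) (mem_univ z.1)

end Probability

section Gibbs

lemma sub_mul_div_log_two_le {a b c : ℝ} (hc : 0 ≤ c) (hca : c ≤ a) (hcb : c ≤ b) :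
    (c - a * b) / Real.log 2 ≤ c * (Real.logb 2 c - Real.logb 2 a - Real.logb 2 b) := by
  have hlog2 : 0 < Real.log 2 := Real.log_pos one_lt_two
  rcases hc.eq_or_lt with rfl | hc
  · simpa using div_nonpos_of_nonpos_of_nonneg (neg_nonpos.2 (mul_nonneg hca hcb)) hlog2.le
  have ha := hc.trans_le hca
  have hb := hc.trans_le hcb
  have hgibbs : 1 - (c / (a * b))⁻¹ ≤ Real.log (c / (a * b)) :=
    Real.one_sub_inv_le_log_of_pos (by positivity)
  rw [Real.log_div hc.ne' (by positivity), Real.log_mul ha.ne' hb.ne', inv_div] at hgibbs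
  have hcab : c * (a * b / c) = a * b := mul_div_cancel₀ _ hc.ne'
  have key : c - a * b ≤ c * (Real.log c - Real.log a - Real.log b) := by
    nlinarith [mul_le_mul_of_nonneg_left hgibbs hc.le]
  calc (c - a * b) / Real.log 2
      ≤ c * (Real.log c - Real.log a - Real.log b) / Real.log 2 :=
        div_le_div_of_nonneg_right key hlog2.le
    _ = c * (Real.logb 2 c - Real.logb 2 a - Real.logb 2 b) := by
        simp only [Real.logb]
        ring

variable {Ω α β : Type*} [Fintype Ω] [Fintype α] [Fintype β] {p : Ω → ℝ}

lemma mutInfo_eq_sum (X : Ω → α) (Y : Ω → β) :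
    mutInfo p X Y = ∑ z : α × β, prob p (fun ω => (X ω, Y ω)) z *
      (Real.logb 2 (prob p (fun ω => (X ω, Y ω)) z)
        - Real.logb 2 (prob p X z.1) - Real.logb 2 (prob p Y z.2)) := by
  have hX : ∑ x, prob p X x * Real.logb 2 (prob p X x)
      = ∑ z : α × β, prob p (fun ω => (X ω, Y ω)) z * Real.logb 2 (prob p X z.1) := by
    simp only [Fintype.sum_prod_type, ← sum_mul, sum_prob_pair_right]
  have hY : ∑ y, prob p Y y * Real.logb 2 (prob p Y y)
      = ∑ z : α × β, prob p (fun ω => (X ω, Y ω)) z * Real.logb 2 (prob p Y z.2) := by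
    rw [Fintype.sum_prod_type_right]
    simp only [← sum_mul, sum_prob_pair_left]
  simp only [mutInfo, ent, hX, hY, mul_sub, sum_sub_distrib]
  ring

lemma mutInfo_ge_of_prob_pair_eq_zero (hp : ∀ ω, 0 ≤ p ω) (hs : ∑ ω, p ω = 1)
    (X : Ω → α) (Y : Ω → β) {x₀ : α} {y₀ : β}
    (h₀ : prob p (fun ω => (X ω, Y ω)) (x₀, y₀) = 0) :
    prob p X x₀ * prob p Y y₀ / Real.log 2 ≤ mutInfo p X Y := by
  set XY : Ω → α × β := fun ω => (X ω, Y ω)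
  -- The termwise bounds `c - a b ≤ c log (c / (a b))` sum to `0`; at `(x₀, y₀)` the term is `0`
  -- instead of `-a b`, which gains `a b`.
  have hbound : ∀ z : α × β,
      (prob p XY z - prob p X z.1 * prob p Y z.2) / Real.log 2
        + (if z = (x₀, y₀) then prob p X x₀ * prob p Y y₀ / Real.log 2 else 0)
      ≤ prob p XY z * (Real.logb 2 (prob p XY z)
          - Real.logb 2 (prob p X z.1) - Real.logb 2 (prob p Y z.2)) := by
    intro z
    split_ifs with hz
    · subst hz
      simp [h₀, neg_div]
    · simpa using sub_mul_div_log_two_le (prob_nonneg hp XY z)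
        (prob_pair_le_fst hp X Y z) (prob_pair_le_snd hp X Y z)
  have hprod : ∑ z : α × β, prob p X z.1 * prob p Y z.2 = 1 := by
    rw [Fintype.sum_prod_type, ← sum_mul_sum, sum_prob, sum_prob, hs, one_mul]
  calc prob p X x₀ * prob p Y y₀ / Real.log 2
      = ∑ z : α × β, ((prob p XY z - prob p X z.1 * prob p Y z.2) / Real.log 2
          + (if z = (x₀, y₀) then prob p X x₀ * prob p Y y₀ / Real.log 2 else 0)) := by
        rw [sum_add_distrib, ← sum_div, sum_sub_distrib, sum_prob, hs, hprod, sum_ite_eq']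
        simp
    _ ≤ mutInfo p X Y := (sum_le_sum fun z _ => hbound z).trans_eq (mutInfo_eq_sum X Y).symm

lemma prob_pair_pos_of_mutInfo_eq_zero (hp : ∀ ω, 0 ≤ p ω) (hs : ∑ ω, p ω = 1)
    {X : Ω → α} {Y : Ω → β} (hI : mutInfo p X Y = 0) {x : α} {y : β}
    (hx : 0 < prob p X x) (hy : 0 < prob p Y y) :
    0 < prob p (fun ω => (X ω, Y ω)) (x, y) := by
  refine (prob_nonneg hp _ _).lt_of_ne fun h₀ => ?_
  have := mutInfo_ge_of_prob_pair_eq_zero hp hs X Y h₀.symm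
  rw [hI] at this
  exact (div_pos (mul_pos hx hy) (Real.log_pos one_lt_two)).not_ge this

end Gibbs

namespace SingleDBSPIR

variable {K L : ℕ} (P : SingleDBSPIR K L)

noncomputable def queryFn (k : Fin K) : P.𝓕 → P.𝓠 := (P.hQ k).choose

noncomputable def answerFn (k : Fin K) : P.𝓠 → (Fin K → Fin L → ZMod 2) → P.𝓢 → P.𝓐 :=
  (P.hA k).choose

noncomputable def decodeFn (k : Fin K) : P.𝓐 → P.𝓕 → Fin L → ZMod 2 := (P.hCorrect k).choose

lemma Q_eq_queryFn (k : Fin K) (ω : P.Ω) : P.Q k ω = P.queryFn k (P.F ω) :=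
  (P.hQ k).choose_spec ω

lemma A_eq_answerFn (k : Fin K) (ω : P.Ω) :
    P.A k ω = P.answerFn k (P.Q k ω) (fun j => P.W j ω) (P.S ω) :=
  (P.hA k).choose_spec ω

lemma W_eq_decodeFn (k : Fin K) (ω : P.Ω) : P.W k ω = P.decodeFn k (P.A k ω) (P.F ω) :=
  (P.hCorrect k).choose_spec ω

lemma exists_p_pos : ∃ ω, 0 < P.p ω := by
  obtain ⟨ω, -, hω⟩ := exists_lt_of_sum_lt (s := univ) (f := fun _ => (0 : ℝ)) (g := P.p)
    (by simp [P.p_sum])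
  exact ⟨ω, hω⟩

lemma prob_W_pos (k : Fin K) (w : Fin L → ZMod 2) : 0 < prob P.p (P.W k) w := by
  rw [P.hWunif k w]
  positivity

lemma exists_pos_W_S_F_eq (w : Fin K → Fin L → ZMod 2) {s : P.𝓢} {f : P.𝓕}
    (hs : 0 < prob P.p P.S s) (hf : 0 < prob P.p P.F f) :
    ∃ ω, 0 < P.p ω ∧ (fun j => P.W j ω) = w ∧ P.S ω = s ∧ P.F ω = f := by
  have h : 0 < prob P.p (fun ω => ((fun j => P.W j ω), P.S ω, P.F ω)) (w, s, f) := by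
    rw [P.hIndep]
    exact mul_pos (mul_pos (prod_pos fun k _ => P.prob_W_pos k (w k)) hs) hf
  obtain ⟨ω, hω, hωeq⟩ := (prob_pos_iff P.p_nonneg).1 h
  simp only [Prod.mk.injEq] at hωeq
  exact ⟨ω, hω, hωeq⟩

lemma exists_pos_of_userPriv (k k' : Fin K) {ω : P.Ω} (hω : 0 < P.p ω) :
    ∃ ω', 0 < P.p ω' ∧ P.Q k' ω' = P.Q k ω ∧ P.A k' ω' = P.A k ω ∧
      (fun j => P.W j ω') = (fun j => P.W j ω) ∧ P.S ω' = P.S ω := by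
  have h := prob_apply_pos P.p_nonneg hω fun ω => (P.Q k ω, P.A k ω, (fun j => P.W j ω), P.S ω)
  rw [P.hUserPriv k k'] at h
  obtain ⟨ω', hω', hω'eq⟩ := (prob_pos_iff P.p_nonneg).1 h
  simp only [Prod.mk.injEq] at hω'eq
  exact ⟨ω', hω', hω'eq⟩

lemma answerFn_eq_of_pos (k k' : Fin K) {ω : P.Ω} (hω : 0 < P.p ω) :
    P.answerFn k' (P.Q k ω) (fun j => P.W j ω) (P.S ω) = P.A k ω := by
  obtain ⟨ω', -, hQ, hA, hW, hS⟩ := P.exists_pos_of_userPriv k k' hω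
  rw [← hQ, ← hW, ← hS, ← P.A_eq_answerFn, hA]

lemma exists_decoder_of_Q_eq (k k' : Fin K) {ω₀ : P.Ω} (hω₀ : 0 < P.p ω₀) :
    ∃ g : P.𝓐 → Fin L → ZMod 2,
      ∀ ω, 0 < P.p ω → P.Q k ω = P.Q k ω₀ → P.W k' ω = g (P.A k ω) := by
  obtain ⟨ω₁, hω₁, hQ₁, -⟩ := P.exists_pos_of_userPriv k k' hω₀
  refine ⟨fun a => P.decodeFn k' a (P.F ω₁), fun ω hω hQ => ?_⟩
  obtain ⟨ω', -, hW, hS, hF⟩ := P.exists_pos_W_S_F_eq (fun j => P.W j ω)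
    (prob_apply_pos P.p_nonneg hω P.S) (prob_apply_pos P.p_nonneg hω₁ P.F)
  have hA : P.A k' ω' = P.A k ω := by
    rw [P.A_eq_answerFn k' ω', P.Q_eq_queryFn k' ω', hF, ← P.Q_eq_queryFn k' ω₁, hQ₁, ← hQ, hW,
      hS, P.answerFn_eq_of_pos k k' hω]
  calc P.W k' ω = P.W k' ω' := (congrFun hW k').symm
    _ = P.decodeFn k' (P.A k ω) (P.F ω₁) := by rw [P.W_eq_decodeFn k' ω', hA, hF]

end SingleDBSPIR

/-- (Infeasibility of single-database SPIR.) For `K ≥ 2` messages of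
`L ≥ 1` bits and a single database, no zero-error SPIR scheme exists. -/
theorem single_database_spir_infeasible (K L : ℕ) (hK : 2 ≤ K) (hL : 1 ≤ L) :
    IsEmpty (SingleDBSPIR K L) := by
  refine ⟨fun P => ?_⟩
  have hp := P.p_nonneg
  let k : Fin K := ⟨0, by omega⟩
  let k' : Fin K := ⟨1, by omega⟩
  have hk' : k' ≠ k := by simp [k, k', Fin.ext_iff]
  obtain ⟨ω₀, hω₀⟩ := P.exists_p_pos
  obtain ⟨g, hg⟩ := P.exists_decoder_of_Q_eq k k' hω₀
  set c := g (P.A k ω₀)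
  obtain ⟨ω₁, hω₁, hW₁, -⟩ := P.exists_pos_W_S_F_eq (fun _ => c + 1)
    (prob_apply_pos hp hω₀ P.S) (prob_apply_pos hp hω₀ P.F)
  have hjoint := prob_pair_pos_of_mutInfo_eq_zero hp P.p_sum (P.hDBPriv k)
    (x := fun _ => c + 1) (y := (P.Q k ω₀, P.A k ω₀, P.F ω₀))
    ((prob_pos_iff hp).2 ⟨ω₁, hω₁, funext fun j => congrFun hW₁ j⟩)
    (prob_apply_pos hp hω₀ fun ω => (P.Q k ω, P.A k ω, P.F ω))
  obtain ⟨ω, hω, hωeq⟩ := (prob_pos_iff hp).1 hjoint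
  simp only [Prod.mk.injEq] at hωeq
  obtain ⟨hW, hQ, hA, -⟩ := hωeq
  have hdecode : c + 1 = c := by
    rw [← congrFun hW ⟨k', hk'⟩, hg ω hω hQ, hA]
  have hone : (1 : Fin L → ZMod 2) ≠ 0 := fun h => by simpa using congrFun h ⟨0, hL⟩
  exact hone (add_eq_left.1 hdecode)
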